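/- arXiv:1602.02043 — 3 statements merged into one kernel-verified Lean document; each statement's English description precedes it below -/
import Mathlib

section
/- Let A be a C*-algebra and let a, b be positive elements of A with a ≤ b. Then the sequence z_n := a^{1/2} b^{1/2} (b + 1/n)^{-1} (inverse taken in the unitization) consists of contractions (‖z_n‖ ≤ 1 for all n) and satisfies z_n b^{1/2} → a^{1/2} in norm. -/
/-!
For self-adjoint `w`, conjugating `a ≤ b` gives `‖√a * w‖ ^ 2 = ‖w a w‖ ≤ ‖w b w‖`; when
`w = g(b)` the right side is at most `sup_{t ∈ σ(b)} t g(t)²`. Both claims are of this form,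
with `ε = 1/n` and `t ≥ 0` on `σ(b)`: `z_ε = √a g(b)` for `g(t) = √t / (t + ε)`, where
`t g(t)² = (t / (t + ε))² ≤ 1`, and `z_ε √b - √a = √a h(b)` for `h(t) = -ε / (t + ε)`, where
`t h(t)² ≤ ε`.
-/

open Filter

section

variable {A : Type*} [CStarAlgebra A] [PartialOrder A] [StarOrderedRing A] {a b : A}

lemma norm_sqrt_mul_sq_le_of_le (ha : 0 ≤ a) (hab : a ≤ b) {w : A} (hw : IsSelfAdjoint w) :
    ‖CFC.sqrt a * w‖ ^ 2 ≤ ‖w * b * w‖ := by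
  have hstar : star (CFC.sqrt a * w) * (CFC.sqrt a * w) = w * a * w := by
    rw [star_mul, hw.star_eq, (CFC.sqrt_nonneg a).isSelfAdjoint.star_eq, mul_assoc w,
      ← mul_assoc (CFC.sqrt a), CFC.sqrt_mul_sqrt_self a ha, ← mul_assoc]
  rw [sq, ← CStarRing.norm_star_mul_self, hstar]
  exact CStarAlgebra.norm_le_norm_of_nonneg_of_le (hw.conjugate_nonneg ha)
    (hw.conjugate_le_conjugate hab)

lemma norm_sqrt_mul_cfc_sq_le (ha : 0 ≤ a) (hab : a ≤ b) {g : ℝ → ℝ}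
    (hg : ContinuousOn g (spectrum ℝ b)) {C : ℝ} (hC : 0 ≤ C)
    (h : ∀ t ∈ spectrum ℝ b, t * g t ^ 2 ≤ C) :
    ‖CFC.sqrt a * cfc g b‖ ^ 2 ≤ C := by
  have hb : 0 ≤ b := ha.trans hab
  have hconj : cfc g b * b * cfc g b = cfc (fun t => t * g t ^ 2) b := by
    nth_rw 2 [← cfc_id' ℝ b]
    rw [← cfc_mul .., ← cfc_mul ..]
    exact cfc_congr fun t _ => by ring
  refine (norm_sqrt_mul_sq_le_of_le ha hab (cfc_predicate g b)).trans ?_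
  rw [hconj]
  refine norm_cfc_le hC fun t ht => ?_
  rw [Real.norm_of_nonneg (mul_nonneg (spectrum_nonneg_of_nonneg hb ht) (sq_nonneg _))]
  exact h t ht

lemma continuousOn_inv_add_spectrum (hb : 0 ≤ b) {ε : ℝ} (hε : 0 < ε) :
    ContinuousOn (fun t => (t + ε)⁻¹) (spectrum ℝ b) :=
  ContinuousOn.inv₀ (by fun_prop) fun t ht =>
    (add_pos_of_nonneg_of_pos (spectrum_nonneg_of_nonneg hb ht) hε).ne'

lemma sqrt_mul_inverse_add_smul_one (hb : 0 ≤ b) {ε : ℝ} (hε : 0 < ε) :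
    CFC.sqrt b * Ring.inverse (b + ε • 1) = cfc (fun t => √t * (t + ε)⁻¹) b := by
  have hne : ∀ t ∈ spectrum ℝ b, t + ε ≠ 0 := fun t ht =>
    (add_pos_of_nonneg_of_pos (spectrum_nonneg_of_nonneg hb ht) hε).ne'
  rw [cfc_mul _ _ b (by fun_prop) (continuousOn_inv_add_spectrum hb hε),
    cfc_inv (fun t => t + ε) b hne, cfc_add_const ε (fun t => t) b, cfc_id' ℝ b,
    Algebra.algebraMap_eq_smul_one, CFC.sqrt_eq_real_sqrt b hb, cfcₙ_eq_cfc]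

lemma norm_sqrt_mul_sqrt_mul_inverse_le_one (ha : 0 ≤ a) (hab : a ≤ b) {ε : ℝ} (hε : 0 < ε) :
    ‖CFC.sqrt a * CFC.sqrt b * Ring.inverse (b + ε • 1)‖ ≤ 1 := by
  have hb : 0 ≤ b := ha.trans hab
  have hcont := continuousOn_inv_add_spectrum hb hε
  rw [mul_assoc, sqrt_mul_inverse_add_smul_one hb hε,
    ← pow_le_one_iff_of_nonneg (norm_nonneg _) two_ne_zero]
  refine norm_sqrt_mul_cfc_sq_le ha hab (by fun_prop) zero_le_one fun t ht => ?_
  have ht : 0 ≤ t := spectrum_nonneg_of_nonneg hb ht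
  have hsq : t * (√t * (t + ε)⁻¹) ^ 2 = (t / (t + ε)) ^ 2 := by
    rw [mul_pow, Real.sq_sqrt ht]; ring
  rw [hsq]
  exact pow_le_one₀ (by positivity) (div_le_one_of_le₀ (by linarith) (by positivity))

lemma norm_sqrt_mul_sqrt_mul_inverse_mul_sqrt_sub_le (ha : 0 ≤ a) (hab : a ≤ b) {ε : ℝ}
    (hε : 0 < ε) :
    ‖CFC.sqrt a * CFC.sqrt b * Ring.inverse (b + ε • 1) * CFC.sqrt b - CFC.sqrt a‖ ≤ √ε := by
  have hb : 0 ≤ b := ha.trans hab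
  have hcont := continuousOn_inv_add_spectrum hb hε
  have hdiff : CFC.sqrt a * CFC.sqrt b * Ring.inverse (b + ε • 1) * CFC.sqrt b - CFC.sqrt a =
      CFC.sqrt a * cfc (fun t => √t * (t + ε)⁻¹ * √t - 1) b := by
    rw [cfc_sub _ _ b (by fun_prop) (by fun_prop), cfc_const_one ℝ b,
      cfc_mul (fun t => √t * (t + ε)⁻¹) Real.sqrt b (by fun_prop) (by fun_prop),
      ← sqrt_mul_inverse_add_smul_one hb hε, ← cfcₙ_eq_cfc, ← CFC.sqrt_eq_real_sqrt b hb,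
      mul_sub_one, mul_assoc, mul_assoc, mul_assoc]
  rw [hdiff]
  refine Real.le_sqrt_of_sq_le (norm_sqrt_mul_cfc_sq_le ha hab (by fun_prop) hε.le fun t ht => ?_)
  have ht : 0 ≤ t := spectrum_nonneg_of_nonneg hb ht
  have hdiff_scalar : √t * (t + ε)⁻¹ * √t - 1 = -(ε / (t + ε)) := by
    rw [mul_right_comm, Real.mul_self_sqrt ht]; field_simp; ring
  rw [hdiff_scalar, neg_sq, div_pow, mul_div_assoc', div_le_iff₀ (by positivity)]
  nlinarith [mul_nonneg ht hε.le]

end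

/-- For positive elements `a ≤ b` in a C*-algebra, the elements
`z n = √a * √b * (b + 1/n)⁻¹` are contractions and `z n * √b → √a` in norm. -/
theorem stmt_0 {A : Type*} [CStarAlgebra A] [PartialOrder A] [StarOrderedRing A]
    (a b : A) (ha : 0 ≤ a) (hab : a ≤ b)
    (z : ℕ → A)
    (hz : ∀ n : ℕ, z n = CFC.sqrt a * CFC.sqrt b * Ring.inverse (b + ((n : ℝ)⁻¹) • 1)) :
    (∀ n : ℕ, 1 ≤ n → ‖z n‖ ≤ 1) ∧
      Filter.Tendsto (fun n => z n * CFC.sqrt b) Filter.atTop (nhds (CFC.sqrt a)) := by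
  have hpos : ∀ n : ℕ, 1 ≤ n → (0 : ℝ) < (n : ℝ)⁻¹ := fun n hn => by positivity
  refine ⟨fun n hn => hz n ▸ norm_sqrt_mul_sqrt_mul_inverse_le_one ha hab (hpos n hn), ?_⟩
  have hsqrt_inv : Tendsto (fun n : ℕ => √(n : ℝ)⁻¹) atTop (nhds 0) :=
    Real.sqrt_zero ▸ (Real.continuous_sqrt.tendsto 0).comp tendsto_inv_atTop_nhds_zero_nat
  rw [tendsto_iff_norm_sub_tendsto_zero]
  refine squeeze_zero' (.of_forall fun n => norm_nonneg _) ?_ hsqrt_inv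
  filter_upwards [eventually_ge_atTop 1] with n hn
  rw [hz n]
  exact norm_sqrt_mul_sqrt_mul_inverse_mul_sqrt_sub_le ha hab (hpos n hn)
end

section
/- Let X be a compact metric space and let (x_n) and (y_n) be two dense sequences in X such that for every ε > 0 there is a finite partition C_1,…,C_N of X into sets of diameter < ε with {n : x_n ∈ C_i} and {n : y_n ∈ C_i} both infinite for each i. Then for every ε > 0 there exists a bijection σ : ℕ → ℕ with d(x_n, y_{σ(n)}) < ε for all n. -/
/-!
Label every point by the cell of the partition containing it. Both label sequences take each
value infinitely often, so the fibres of the two labellings of `ℕ` are countably infinite and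
fibrewise bijections glue to a label-preserving `σ : ℕ ≃ ℕ`. Then `x n` and `y (σ n)` share a
cell, so their distance is at most its diameter; compactness makes that diameter meaningful.
-/

theorem exists_equiv_comp_eq_of_fibers_infinite {α β ι : Type*} [Countable α] [Countable β]
    (f : α → ι) (g : β → ι) (hf : ∀ i, {a | f a = i}.Infinite)
    (hg : ∀ i, {b | g b = i}.Infinite) :
    ∃ e : α ≃ β, ∀ a, g (e a) = f a :=
  have : ∀ i, Infinite {a // f a = i} := fun i => (hf i).to_subtype
  have : ∀ i, Infinite {b // g b = i} := fun i => (hg i).to_subtype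
  let e i := Classical.arbitrary ({a // f a = i} ≃ {b // g b = i})
  ⟨Equiv.ofFiberEquiv e, Equiv.ofFiberEquiv_map e⟩

theorem exists_index_of_pairwise_disjoint_of_iUnion_eq_univ {X ι : Type*} {C : ι → Set X}
    (hdisj : Pairwise fun i j => Disjoint (C i) (C j)) (hcover : ⋃ i, C i = Set.univ) :
    ∃ p : X → ι, ∀ z i, z ∈ C i ↔ p z = i := by
  have hmem : ∀ z, ∃ i, z ∈ C i := fun z => Set.mem_iUnion.mp (hcover ▸ Set.mem_univ z)
  choose p hp using hmem
  refine ⟨p, fun z i => ⟨fun hz => ?_, fun h => h ▸ hp z⟩⟩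
  by_contra hne
  exact Set.disjoint_left.mp (hdisj hne) (hp z) hz

/-- If two sequences in a compact metric space admit, for every `ε > 0`, a finite partition
of the space into sets of diameter `< ε` each containing infinitely many terms of both
sequences, then for every `ε > 0` there is a bijection `σ : ℕ → ℕ` with
`d(x n, y (σ n)) < ε` for all `n`. -/
theorem stmt_10 {X : Type*} [MetricSpace X] [CompactSpace X] (x y : ℕ → X)
    (hpart : ∀ ε : ℝ, 0 < ε → ∃ (N : ℕ) (C : Fin N → Set X),
      (Pairwise fun i j => Disjoint (C i) (C j)) ∧
      (⋃ i, C i) = Set.univ ∧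
      (∀ i, Metric.diam (C i) < ε) ∧
      (∀ i, {n : ℕ | x n ∈ C i}.Infinite) ∧
      (∀ i, {n : ℕ | y n ∈ C i}.Infinite)) :
    ∀ ε : ℝ, 0 < ε → ∃ σ : ℕ ≃ ℕ, ∀ n : ℕ, dist (x n) (y (σ n)) < ε := by
  intro ε hε
  obtain ⟨N, C, hdisj, hcover, hdiam, hxinf, hyinf⟩ := hpart ε hε
  obtain ⟨p, hp⟩ := exists_index_of_pairwise_disjoint_of_iUnion_eq_univ hdisj hcover
  obtain ⟨σ, hσ⟩ := exists_equiv_comp_eq_of_fibers_infinite (p ∘ x) (p ∘ y)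
    (by simpa only [Function.comp_apply, hp] using hxinf)
    (by simpa only [Function.comp_apply, hp] using hyinf)
  refine ⟨σ, fun n => ?_⟩
  have hxn : x n ∈ C (p (x n)) := (hp _ _).mpr rfl
  have hyn : y (σ n) ∈ C (p (x n)) := (hp _ _).mpr (hσ n)
  calc dist (x n) (y (σ n)) ≤ Metric.diam (C (p (x n))) :=
        Metric.dist_le_diam_of_mem Metric.isBounded_of_compactSpace hxn hyn
    _ < ε := hdiam _
end

section
/- Let A, B be unital C*-algebras with B finite (one-sided invertible elements are invertible). Let π₁, π₂ : A → B be unital *-homomorphisms and suppose there is a sequence (x_n) in B with ‖x_n* π₁(a) x_n − π₂(a)‖ → 0 for all a ∈ A. Then there exists a sequence of unitaries (u_n) in B (for large n, obtained from polar decompositions of the x_n) with ‖u_n* π₁(a) u_n − π₂(a)‖ → 0 for all a ∈ A; i.e. π₁ and π₂ are approximately unitarily equivalent. -/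
/-!
Taking `a = 1` gives `x n⋆ * x n → 1`, so `x n⋆ * x n` is eventually invertible; then `x n` has
a left inverse and, `B` being finite, is invertible. The unitary part `u n = x n * |x n|⁻¹` of its
polar decomposition satisfies `u n⋆ * b * u n = |x n|⁻¹ * (x n⋆ * b * x n) * |x n|⁻¹`, and
`|x n| = √(x n⋆ * x n) → 1` by continuity of the square root.
-/

open Filter Topology
open scoped Ring

theorem Filter.Eventually.exists_forall_mem_eventuallyEq {ι α : Type*} {l : Filter ι}
    {s : Set α} {u : ι → α} (hu : ∀ᶠ i in l, u i ∈ s) (hs : s.Nonempty) :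
    ∃ v : ι → α, (∀ i, v i ∈ s) ∧ v =ᶠ[l] u := by
  classical
  obtain ⟨a, ha⟩ := hs
  refine ⟨fun i => if u i ∈ s then u i else a, fun i => ?_, hu.mono fun i hi => if_pos hi⟩
  by_cases hi : u i ∈ s <;> simp [hi, ha]

theorem eventually_isUnit_of_tendsto_star_mul_self {ι B : Type*} {l : Filter ι}
    [NormedRing B] [CompleteSpace B] [StarRing B] [IsDedekindFiniteMonoid B] {x : ι → B}
    (h : Tendsto (fun i => star (x i) * x i) l (𝓝 1)) : ∀ᶠ i in l, IsUnit (x i) :=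
  (h.eventually (Units.isOpen.mem_nhds isUnit_one)).mono fun _ => isUnit_of_mul_isUnit_right

section CStarAlgebra

variable {B : Type*} [CStarAlgebra B] [PartialOrder B] [StarOrderedRing B]

theorem tendsto_cfcAbs_of_tendsto_star_mul_self {ι : Type*} {l : Filter ι} {x : ι → B}
    (h : Tendsto (fun i => star (x i) * x i) l (𝓝 1)) :
    Tendsto (fun i => CFC.abs (x i)) l (𝓝 1) := by
  have hsqrt := (CFC.continuousOn_sqrt (A := B) 1 zero_le_one).tendsto.comp
    (tendsto_nhdsWithin_iff.mpr ⟨h, .of_forall fun i => star_mul_self_nonneg (x i)⟩)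
  rwa [CFC.sqrt_one] at hsqrt

theorem IsUnit.mul_ringInverse_cfcAbs_mem_unitary {x : B} (hx : IsUnit x) :
    x * (CFC.abs x)⁻¹ʳ ∈ unitary B := by
  have habs : IsUnit (CFC.abs x) :=
    (CFC.isUnit_sqrt_iff _ (star_mul_self_nonneg x)).mpr (hx.star.mul hx)
  refine (hx.mul habs.ringInverse).mem_unitary_of_star_mul_self ?_
  have hsa : IsSelfAdjoint (CFC.abs x)⁻¹ʳ :=
    (IsSelfAdjoint.of_nonneg (CFC.abs_nonneg x)).ringInverse
  calc star (x * (CFC.abs x)⁻¹ʳ) * (x * (CFC.abs x)⁻¹ʳ)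
      = (CFC.abs x)⁻¹ʳ * (CFC.abs x * CFC.abs x) * (CFC.abs x)⁻¹ʳ := by
        rw [CFC.abs_mul_abs, star_mul, hsa.star_eq]; noncomm_ring
    _ = 1 := by
        rw [← mul_assoc, Ring.inverse_mul_cancel _ habs, one_mul, Ring.mul_inverse_cancel _ habs]

end CStarAlgebra

theorem tendsto_star_mul_mul_mul_of_tendsto_one {ι R : Type*} {l : Filter ι} [Ring R]
    [StarRing R] [TopologicalSpace R] [IsTopologicalRing R] [ContinuousStar R]
    {x g : ι → R} {b c : R} (h : Tendsto (fun i => star (x i) * b * x i) l (𝓝 c))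
    (hg : Tendsto g l (𝓝 1)) :
    Tendsto (fun i => star (x i * g i) * b * (x i * g i)) l (𝓝 c) := by
  have hg' : Tendsto (fun i => star (g i)) l (𝓝 1) := by simpa using hg.star
  simpa [star_mul, mul_assoc] using (hg'.mul h).mul hg

/-- If `B` is a finite unital C*-algebra and two unital *-homomorphisms `π₁ π₂ : A → B`
are intertwined by a sequence `(x n)` in the sense that `x n * π₁ a * x n - π₂ a → 0`
for all `a`, then they are approximately unitarily equivalent: there are unitaries
`u n ∈ B` with `(u n)* π₁(a) (u n) → π₂(a)` for all `a`. -/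
theorem stmt_15 {A B : Type*} [CStarAlgebra A] [CStarAlgebra B]
    (hfin : ∀ u v : B, u * v = 1 → v * u = 1)
    (π₁ π₂ : A →⋆ₐ[ℂ] B) (x : ℕ → B)
    (hx : ∀ a : A, Filter.Tendsto
      (fun n => ‖star (x n) * π₁ a * x n - π₂ a‖) Filter.atTop (nhds 0)) :
    ∃ u : ℕ → B, (∀ n, u n ∈ unitary B) ∧
      ∀ a : A, Filter.Tendsto
        (fun n => ‖star (u n) * π₁ a * u n - π₂ a‖) Filter.atTop (nhds 0) := by
  let := CStarAlgebra.spectralOrder B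
  have := CStarAlgebra.spectralOrderedRing B
  have : IsDedekindFiniteMonoid B := ⟨hfin _ _⟩
  have hconj (a : A) : Tendsto (fun n => star (x n) * π₁ a * x n) atTop (𝓝 (π₂ a)) :=
    tendsto_iff_norm_sub_tendsto_zero.mpr (hx a)
  have hxx : Tendsto (fun n => star (x n) * x n) atTop (𝓝 1) := by
    simpa using hconj 1
  have hinv : Tendsto (fun n => (CFC.abs (x n))⁻¹ʳ) atTop (𝓝 1) := by
    have := (NormedRing.inverse_continuousAt (1 : Bˣ)).tendsto
    rw [Units.val_one, Ring.inverse_one] at this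
    exact this.comp (tendsto_cfcAbs_of_tendsto_star_mul_self hxx)
  obtain ⟨u, hu, hu_eq⟩ := Eventually.exists_forall_mem_eventuallyEq
    ((eventually_isUnit_of_tendsto_star_mul_self hxx).mono
      fun n hn => hn.mul_ringInverse_cfcAbs_mem_unitary)
    ⟨1, one_mem _⟩
  refine ⟨u, hu, fun a => tendsto_iff_norm_sub_tendsto_zero.mp ?_⟩
  refine (tendsto_star_mul_mul_mul_of_tendsto_one (hconj a) hinv).congr' ?_
  filter_upwards [hu_eq] with n hn
  rw [hn]
end
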